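/- Let a be an ASHE with direction vector v and blocking relation R = {(i,i) : i ∈ B} where |v_i| = 1 for all i ∈ B. Then the envelope transition is nonexpansive: for all m ≤ M, writing [m',M'] = [m,M] ⊡ a, we have ‖M' − m'‖₁ ≤ ‖M − m‖₁. -/

import Mathlib

/-!
With a diagonal blocking relation, coordinate `i` can only be blocked by its own overflow, and
when `|v i| ≤ 1` an overflow from inside `[0, C i]` happens only at the boundary value that the
clamp `max 0 (min (x i + v i) (C i))` would produce anyway. So on the box the action is the
coordinatewise clamp of `x + v`, which is monotone and `1`-Lipschitz in each coordinate. By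
monotonicity the envelope of `[m, M]` is `[m · a, M · a]`, and the Lipschitz bound gives the
`ℓ¹` estimate coordinate by coordinate.
-/

open Classical in
/-- The action of an ASHE with capacities `C`, direction vector `v` and
blocking relation `R`. -/
noncomputable def asheAct {d : ℕ} (C v : Fin d → ℤ) (R : Fin d → Fin d → Prop)
    (x : Fin d → ℤ) : Fin d → ℤ := fun i =>
  if ∃ j, ¬(0 ≤ x j + v j ∧ x j + v j ≤ C j) ∧ R j i then x i
  else max 0 (min (x i + v i) (C i))

open Set

def clampStep {d : ℕ} (C v x : Fin d → ℤ) : Fin d → ℤ :=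
  fun i => max 0 (min (x i + v i) (C i))

theorem clampStep_mono {d : ℕ} (C v : Fin d → ℤ) : Monotone (clampStep C v) := fun x y hxy i => by
  simp only [clampStep]
  gcongr
  exact hxy i

theorem abs_clampStep_sub_le {d : ℕ} (C v x y : Fin d → ℤ) (i : Fin d) :
    |clampStep C v y i - clampStep C v x i| ≤ |y i - x i| := by
  simp only [clampStep]
  calc |max 0 (min (y i + v i) (C i)) - max 0 (min (x i + v i) (C i))|
      ≤ |min (y i + v i) (C i) - min (x i + v i) (C i)| := by
        rw [max_comm 0, max_comm 0]; exact abs_max_sub_max_le_abs _ _ 0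
    _ ≤ max |y i + v i - (x i + v i)| |C i - C i| := abs_min_sub_min_le_max _ _ _ _
    _ = |y i - x i| := by simp

theorem asheAct_eq_clampStep {d : ℕ} {C v : Fin d → ℤ} {R : Fin d → Fin d → Prop}
    (hR : ∀ j i, R j i → j = i ∧ |v i| ≤ 1) {x : Fin d → ℤ} (hx : ∀ i, 0 ≤ x i ∧ x i ≤ C i) :
    asheAct C v R x = clampStep C v x := by
  funext i
  simp only [asheAct, clampStep]
  split_ifs with hblocked
  · obtain ⟨j, hout, hji⟩ := hblocked
    obtain ⟨rfl, hvj⟩ := hR j i hji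
    have := hx j
    rw [abs_le] at hvj
    omega
  · rfl

theorem isGLB_image_Icc_of_monotoneOn {α β : Type*} [Preorder α] [Preorder β] {f : α → β}
    {m M : α} (hmM : m ≤ M) (hf : MonotoneOn f (Icc m M)) :
    IsGLB {y | ∃ x, m ≤ x ∧ x ≤ M ∧ y = f x} (f m) := by
  have h := hf.map_isLeast (isLeast_Icc hmM)
  refine IsLeast.isGLB ⟨⟨m, le_rfl, hmM, rfl⟩, ?_⟩
  rintro _ ⟨x, hmx, hxM, rfl⟩
  exact h.2 ⟨x, ⟨hmx, hxM⟩, rfl⟩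

theorem isLUB_image_Icc_of_monotoneOn {α β : Type*} [Preorder α] [Preorder β] {f : α → β}
    {m M : α} (hmM : m ≤ M) (hf : MonotoneOn f (Icc m M)) :
    IsLUB {y | ∃ x, m ≤ x ∧ x ≤ M ∧ y = f x} (f M) := by
  have h := hf.map_isGreatest (isGreatest_Icc hmM)
  refine IsGreatest.isLUB ⟨⟨M, hmM, le_rfl, rfl⟩, ?_⟩
  rintro _ ⟨x, hmx, hxM, rfl⟩
  exact h.2 ⟨x, ⟨hmx, hxM⟩, rfl⟩

/-- an ASHE with diagonal blocking relation on  and |v_i| = 1 for i ∈ B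
has an ℓ¹-nonexpansive envelope transition. -/
theorem stmt6 {d : ℕ} (C v : Fin d → ℤ) (B : Finset (Fin d))
    (R : Fin d → Fin d → Prop) (hR : ∀ j i, R j i ↔ (j = i ∧ i ∈ B))
    (hv : ∀ i ∈ B, |v i| = 1)
    (m M : Fin d → ℤ)
    (hm : ∀ i, 0 ≤ m i ∧ m i ≤ C i) (hM : ∀ i, 0 ≤ M i ∧ M i ≤ C i)
    (hmM : m ≤ M)
    (m' M' : Fin d → ℤ)
    (hm' : IsGLB {y | ∃ x : Fin d → ℤ, m ≤ x ∧ x ≤ M ∧ y = asheAct C v R x} m')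
    (hM' : IsLUB {y | ∃ x : Fin d → ℤ, m ≤ x ∧ x ≤ M ∧ y = asheAct C v R x} M') :
    ∑ i, |M' i - m' i| ≤ ∑ i, |M i - m i| := by
  have hdiag : ∀ j i, R j i → j = i ∧ |v i| ≤ 1 := fun j i hji => by
    obtain ⟨rfl, hjB⟩ := (hR j i).1 hji
    exact ⟨rfl, (hv j hjB).le⟩
  have hbox : ∀ x ∈ Icc m M, ∀ i, 0 ≤ x i ∧ x i ≤ C i := fun x hx i =>
    ⟨(hm i).1.trans (hx.1 i), (hx.2 i).trans (hM i).2⟩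
  have hmono : MonotoneOn (asheAct C v R) (Icc m M) := fun x hx y hy hxy => by
    rw [asheAct_eq_clampStep hdiag (hbox x hx), asheAct_eq_clampStep hdiag (hbox y hy)]
    exact clampStep_mono C v hxy
  rw [hm'.unique (isGLB_image_Icc_of_monotoneOn hmM hmono),
    hM'.unique (isLUB_image_Icc_of_monotoneOn hmM hmono),
    asheAct_eq_clampStep hdiag (hbox m ⟨le_rfl, hmM⟩),
    asheAct_eq_clampStep hdiag (hbox M ⟨hmM, le_rfl⟩)]
  exact Finset.sum_le_sum fun i _ => abs_clampStep_sub_le C v m M i
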